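/- Let T* > 0 and let w : [0,1] × ℝ × [0,T*) → ℝ be a C² solution of -∂ₜw - η∂_ξw + w²∂²_{ηη}w = 0 with ∂_η w|_{η=0} = 0 and w|_{η=1} = 0. Suppose c(1-η) ≤ w ≤ C(1-η) on {t=0} ∪ {η=1} and as |ξ| → ∞ (uniformly), and suppose w ≤ C(1-η) everywhere on [0,1]×ℝ×[0,T*). Then there exists c₁ > 0 depending only on c, C, T* such that w(η,ξ,t) ≥ c₁(1-η) for all (η,ξ,t) ∈ [0,1] × ℝ × [0,T*). -/

import Mathlib

/-!
Comparison with strict subsolutions `g` of the operator `-∂ₜ - η ∂_ξ + w² ∂²_ηη`: at a minimum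
of `w - g` off the parabolic boundary (`t = 0`, `η = 1`, `|ξ|` large) the first and second order
conditions, together with the equation for `w`, contradict strictness; at `η = 0` the Neumann
condition for `w` and `∂_η g > 0` rule a minimum out. So `g < w` once this holds on the parabolic
boundary. The affine barriers `-ε (2 + t - η)` give `w ≥ 0`; then `0 ≤ w ≤ C (1 - η)` makes
`(c/3) e^{-βt} (1 - η)(1 + 2η) - ε` with `β = 4C² + 1` a strict subsolution, and letting `ε → 0`
gives `w ≥ (c/3) e^{-βT*} (1 - η)`.
-/

open Set Filter Topology Real

section Calculus

variable {f g : ℝ → ℝ} {a b x : ℝ}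

theorem IsMinOn.deriv_nonneg_of_Icc (h : IsMinOn f (Icc a b) x) (hx : x ∈ Ico a b)
    (hf : DifferentiableAt ℝ f x) : 0 ≤ deriv f x := by
  have hseg : segment ℝ x (x + (b - x)) ⊆ Icc a b := by
    rw [add_sub_cancel, segment_eq_Icc hx.2.le]
    exact Icc_subset_Icc_left hx.1
  have := h.localize.hasFDerivWithinAt_nonneg hf.hasDerivAt.hasFDerivAt.hasFDerivWithinAt
    (mem_posTangentConeAt_of_segment_subset hseg)
  simp only [ContinuousLinearMap.toSpanSingleton_apply, smul_eq_mul] at this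
  exact nonneg_of_mul_nonneg_right this (sub_pos.2 hx.2)

theorem IsMinOn.deriv_nonpos_of_Icc (h : IsMinOn f (Icc a b) x) (hx : x ∈ Ioc a b)
    (hf : DifferentiableAt ℝ f x) : deriv f x ≤ 0 := by
  have hseg : segment ℝ x (x + (a - x)) ⊆ Icc a b := by
    rw [add_sub_cancel, segment_symm, segment_eq_Icc hx.1.le]
    exact Icc_subset_Icc_right hx.2
  have := h.localize.hasFDerivWithinAt_nonneg hf.hasDerivAt.hasFDerivAt.hasFDerivWithinAt
    (mem_posTangentConeAt_of_segment_subset hseg)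
  simp only [ContinuousLinearMap.toSpanSingleton_apply, smul_eq_mul] at this
  exact nonpos_of_mul_nonneg_right this (sub_neg.2 hx.1)

theorem IsLocalMin.deriv_deriv_nonneg (h : IsLocalMin f x) (hf : ContinuousAt f x) :
    0 ≤ deriv (deriv f) x := by
  by_contra! hneg
  -- by the second derivative test `x` would also be a local maximum, so `f` is locally constant
  have hmax := isLocalMax_of_deriv_deriv_neg hneg h.deriv_eq_zero hf
  have hconst : f =ᶠ[𝓝 x] fun _ => f x :=
    (h.and hmax).mono fun y hy => le_antisymm hy.2 hy.1
  have hzero : deriv (deriv f) x = 0 := by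
    rw [hconst.deriv.deriv_eq]
    simp
  exact hneg.ne hzero

theorem deriv_deriv_sub (hf : ContDiff ℝ 2 f) (hg : ContDiff ℝ 2 g) (x : ℝ) :
    deriv (deriv fun y => f y - g y) x = deriv (deriv f) x - deriv (deriv g) x := by
  have := iteratedDeriv_sub (n := 2) hf.contDiffAt hg.contDiffAt (x := x)
  simp only [iteratedDeriv_eq_iterate, Function.iterate_succ, Function.iterate_zero,
    Function.comp_apply, id] at this
  exact this

end Calculus

section Slices

variable {F : ℝ → ℝ → ℝ → ℝ} {n : WithTop ℕ∞}

theorem ContDiff.slice_fst (hF : ContDiff ℝ n fun p : ℝ × ℝ × ℝ => F p.1 p.2.1 p.2.2)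
    (ξ t : ℝ) : ContDiff ℝ n fun e => F e ξ t :=
  hF.comp (f := fun e => (e, ξ, t)) (by fun_prop)

theorem ContDiff.slice_snd (hF : ContDiff ℝ n fun p : ℝ × ℝ × ℝ => F p.1 p.2.1 p.2.2)
    (η t : ℝ) : ContDiff ℝ n fun x => F η x t :=
  hF.comp (f := fun x => (η, x, t)) (by fun_prop)

theorem ContDiff.slice_thd (hF : ContDiff ℝ n fun p : ℝ × ℝ × ℝ => F p.1 p.2.1 p.2.2)
    (η ξ : ℝ) : ContDiff ℝ n fun s => F η ξ s :=
  hF.comp (f := fun s => (η, ξ, s)) (by fun_prop)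

end Slices

noncomputable def croccoOperator (u : ℝ → ℝ → ℝ → ℝ) (a η ξ t : ℝ) : ℝ :=
  -(deriv (fun s => u η ξ s) t) - η * deriv (fun x => u η x t) ξ
    + a ^ 2 * deriv (deriv (fun e => u e ξ t)) η

section Comparison

variable {w g : ℝ → ℝ → ℝ → ℝ} {R T Tstar : ℝ}

theorem not_isMinOn_of_strictSubsolution
    (hw : ContDiff ℝ 2 fun p : ℝ × ℝ × ℝ => w p.1 p.2.1 p.2.2)
    (hg : ContDiff ℝ 2 fun p : ℝ × ℝ × ℝ => g p.1 p.2.1 p.2.2)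
    (heq : ∀ η ∈ Ioo (0 : ℝ) 1, ∀ ξ ∈ Ioo (-R) R, ∀ t ∈ Ioc 0 T,
      croccoOperator w (w η ξ t) η ξ t = 0)
    (hneu : ∀ ξ ∈ Ioo (-R) R, ∀ t ∈ Ioc 0 T, deriv (fun e => w e ξ t) 0 = 0)
    (hsub : ∀ η ∈ Ioo (0 : ℝ) 1, ∀ ξ ∈ Ioo (-R) R, ∀ t ∈ Ioc 0 T,
      0 < croccoOperator g (w η ξ t) η ξ t)
    (hsub_neu : ∀ ξ ∈ Ioo (-R) R, ∀ t ∈ Ioc 0 T, 0 < deriv (fun e => g e ξ t) 0)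
    {η₀ ξ₀ t₀ : ℝ} (hη₀ : η₀ ∈ Ico 0 1) (hξ₀ : ξ₀ ∈ Ioo (-R) R) (ht₀ : t₀ ∈ Ioc 0 T) :
    ¬ IsMinOn (fun p : ℝ × ℝ × ℝ => w p.1 p.2.1 p.2.2 - g p.1 p.2.1 p.2.2)
      (Icc 0 1 ×ˢ Icc (-R) R ×ˢ Icc 0 T) (η₀, ξ₀, t₀) := by
  intro hmin
  have hminη : IsMinOn (fun e => w e ξ₀ t₀ - g e ξ₀ t₀) (Icc 0 1) η₀ := isMinOn_iff.2 fun e he =>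
    isMinOn_iff.1 hmin (e, ξ₀, t₀) ⟨he, Ioo_subset_Icc_self hξ₀, Ioc_subset_Icc_self ht₀⟩
  have hminξ : IsMinOn (fun x => w η₀ x t₀ - g η₀ x t₀) (Icc (-R) R) ξ₀ := isMinOn_iff.2 fun x hx =>
    isMinOn_iff.1 hmin (η₀, x, t₀) ⟨Ico_subset_Icc_self hη₀, hx, Ioc_subset_Icc_self ht₀⟩
  have hmint : IsMinOn (fun s => w η₀ ξ₀ s - g η₀ ξ₀ s) (Icc 0 T) t₀ := isMinOn_iff.2 fun s hs =>
    isMinOn_iff.1 hmin (η₀, ξ₀, s) ⟨Ico_subset_Icc_self hη₀, Ioo_subset_Icc_self hξ₀, hs⟩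
  have hwη := (hw.slice_fst ξ₀ t₀).differentiable two_ne_zero
  have hgη := (hg.slice_fst ξ₀ t₀).differentiable two_ne_zero
  -- the slices give `w_t ≤ g_t`, `w_ξ = g_ξ`, `w_ηη ≥ g_ηη` (and `w_η ≥ g_η` at `η₀ = 0`),
  -- which the equation for `w` and the strict inequality for `g` cannot both satisfy
  rcases hη₀.1.eq_or_lt with rfl | hη₀pos
  · have hd := hminη.deriv_nonneg_of_Icc ⟨le_rfl, one_pos⟩ ((hwη 0).sub (hgη 0))
    rw [deriv_fun_sub (hwη 0) (hgη 0), hneu ξ₀ hξ₀ t₀ ht₀] at hd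
    linarith [hsub_neu ξ₀ hξ₀ t₀ ht₀]
  have hηη := (hminη.isLocalMin (Icc_mem_nhds hη₀pos hη₀.2)).deriv_deriv_nonneg
    ((hw.slice_fst ξ₀ t₀).continuous.sub (hg.slice_fst ξ₀ t₀).continuous).continuousAt
  rw [deriv_deriv_sub (hw.slice_fst ξ₀ t₀) (hg.slice_fst ξ₀ t₀)] at hηη
  have hwξ := (hw.slice_snd η₀ t₀).differentiable two_ne_zero ξ₀
  have hgξ := (hg.slice_snd η₀ t₀).differentiable two_ne_zero ξ₀
  have hξ := (hminξ.isLocalMin (Icc_mem_nhds hξ₀.1 hξ₀.2)).deriv_eq_zero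
  rw [deriv_fun_sub hwξ hgξ] at hξ
  have hwt := (hw.slice_thd η₀ ξ₀).differentiable two_ne_zero t₀
  have hgt := (hg.slice_thd η₀ ξ₀).differentiable two_ne_zero t₀
  have ht := hmint.deriv_nonpos_of_Icc ht₀ (hwt.sub hgt)
  rw [deriv_fun_sub hwt hgt] at ht
  have hw_eq := heq η₀ ⟨hη₀pos, hη₀.2⟩ ξ₀ hξ₀ t₀ ht₀
  have hg_sub := hsub η₀ ⟨hη₀pos, hη₀.2⟩ ξ₀ hξ₀ t₀ ht₀
  unfold croccoOperator at hw_eq hg_sub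
  nlinarith [mul_nonneg (sq_nonneg (w η₀ ξ₀ t₀)) (sub_nonneg.2 hηη)]

theorem lt_on_box_of_strictSubsolution
    (hw : ContDiff ℝ 2 fun p : ℝ × ℝ × ℝ => w p.1 p.2.1 p.2.2)
    (hg : ContDiff ℝ 2 fun p : ℝ × ℝ × ℝ => g p.1 p.2.1 p.2.2)
    (heq : ∀ η ∈ Ioo (0 : ℝ) 1, ∀ ξ ∈ Ioo (-R) R, ∀ t ∈ Ioc 0 T,
      croccoOperator w (w η ξ t) η ξ t = 0)
    (hneu : ∀ ξ ∈ Ioo (-R) R, ∀ t ∈ Ioc 0 T, deriv (fun e => w e ξ t) 0 = 0)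
    (hsub : ∀ η ∈ Ioo (0 : ℝ) 1, ∀ ξ ∈ Ioo (-R) R, ∀ t ∈ Ioc 0 T,
      0 < croccoOperator g (w η ξ t) η ξ t)
    (hsub_neu : ∀ ξ ∈ Ioo (-R) R, ∀ t ∈ Ioc 0 T, 0 < deriv (fun e => g e ξ t) 0)
    (hinit : ∀ η ∈ Icc (0 : ℝ) 1, ∀ ξ ∈ Icc (-R) R, g η ξ 0 < w η ξ 0)
    (hdir : ∀ ξ ∈ Icc (-R) R, ∀ t ∈ Icc 0 T, g 1 ξ t < w 1 ξ t)
    (hlat : ∀ η ∈ Icc (0 : ℝ) 1, ∀ ξ, |ξ| = R → ∀ t ∈ Icc 0 T, g η ξ t < w η ξ t) :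
    ∀ η ∈ Icc (0 : ℝ) 1, ∀ ξ ∈ Icc (-R) R, ∀ t ∈ Icc 0 T, g η ξ t < w η ξ t := by
  intro η hη ξ hξ t ht
  obtain ⟨⟨η₀, ξ₀, t₀⟩, ⟨hη₀, hξ₀, ht₀⟩, hmin⟩ :=
    (isCompact_Icc.prod (isCompact_Icc.prod isCompact_Icc)).exists_isMinOn
      (f := fun p : ℝ × ℝ × ℝ => w p.1 p.2.1 p.2.2 - g p.1 p.2.1 p.2.2)
      ⟨(η, ξ, t), hη, hξ, ht⟩ (hw.continuous.sub hg.continuous).continuousOn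
  suffices g η₀ ξ₀ t₀ < w η₀ ξ₀ t₀ by
    linarith [isMinOn_iff.1 hmin (η, ξ, t) ⟨hη, hξ, ht⟩]
  rcases ht₀.1.eq_or_lt with rfl | ht₀pos
  · exact hinit η₀ hη₀ ξ₀ hξ₀
  rcases hη₀.2.eq_or_lt with rfl | hη₀lt
  · exact hdir ξ₀ hξ₀ t₀ ht₀
  by_cases hξR : |ξ₀| = R
  · exact hlat η₀ hη₀ ξ₀ hξR t₀ ht₀
  exact (not_isMinOn_of_strictSubsolution hw hg heq hneu hsub hsub_neu ⟨hη₀.1, hη₀lt⟩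
    (abs_lt.1 ((abs_le.2 hξ₀).lt_of_ne hξR)) ⟨ht₀pos, ht₀.2⟩ hmin).elim

theorem lt_of_strictSubsolution
    (hw : ContDiff ℝ 2 fun p : ℝ × ℝ × ℝ => w p.1 p.2.1 p.2.2)
    (hg : ContDiff ℝ 2 fun p : ℝ × ℝ × ℝ => g p.1 p.2.1 p.2.2)
    (heq : ∀ η ∈ Ioo (0 : ℝ) 1, ∀ ξ, ∀ t ∈ Ioo 0 Tstar, croccoOperator w (w η ξ t) η ξ t = 0)
    (hneu : ∀ ξ, ∀ t ∈ Ioo 0 Tstar, deriv (fun e => w e ξ t) 0 = 0)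
    (hsub : ∀ η ∈ Ioo (0 : ℝ) 1, ∀ ξ, ∀ t ∈ Ioo 0 Tstar, 0 < croccoOperator g (w η ξ t) η ξ t)
    (hsub_neu : ∀ ξ, ∀ t ∈ Ioo 0 Tstar, 0 < deriv (fun e => g e ξ t) 0)
    (hinit : ∀ η ∈ Icc (0 : ℝ) 1, ∀ ξ, g η ξ 0 < w η ξ 0)
    (hdir : ∀ ξ, ∀ t ∈ Ico 0 Tstar, g 1 ξ t < w 1 ξ t)
    (hfar : ∃ R, ∀ η ∈ Icc (0 : ℝ) 1, ∀ ξ, ∀ t ∈ Ico 0 Tstar, R ≤ |ξ| → g η ξ t < w η ξ t) :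
    ∀ η ∈ Icc (0 : ℝ) 1, ∀ ξ, ∀ t ∈ Ico 0 Tstar, g η ξ t < w η ξ t := by
  intro η hη ξ t ht
  obtain ⟨R, hR⟩ := hfar
  have hT {s : ℝ} (hs : s ≤ t) : s < Tstar := hs.trans_lt ht.2
  refine lt_on_box_of_strictSubsolution (R := max R |ξ|) (T := t) hw hg
    (fun η hη ξ _ s hs => heq η hη ξ s ⟨hs.1, hT hs.2⟩)
    (fun ξ _ s hs => hneu ξ s ⟨hs.1, hT hs.2⟩)
    (fun η hη ξ _ s hs => hsub η hη ξ s ⟨hs.1, hT hs.2⟩)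
    (fun ξ _ s hs => hsub_neu ξ s ⟨hs.1, hT hs.2⟩)
    (fun η hη ξ _ => hinit η hη ξ)
    (fun ξ _ s hs => hdir ξ s ⟨hs.1, hT hs.2⟩)
    (fun η hη ξ hξ s hs => hR η hη ξ s ⟨hs.1, hT hs.2⟩ (hξ ▸ le_max_left _ _))
    η hη ξ (abs_le.1 (le_max_right _ _)) t ⟨ht.1, le_rfl⟩

end Comparison

section Barriers

variable {w : ℝ → ℝ → ℝ → ℝ} {Tstar c C : ℝ}

theorem crocco_nonneg
    (hw : ContDiff ℝ 2 fun p : ℝ × ℝ × ℝ => w p.1 p.2.1 p.2.2)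
    (heq : ∀ η ∈ Ioo (0 : ℝ) 1, ∀ ξ, ∀ t ∈ Ioo 0 Tstar, croccoOperator w (w η ξ t) η ξ t = 0)
    (hneu : ∀ ξ, ∀ t ∈ Ioo 0 Tstar, deriv (fun e => w e ξ t) 0 = 0)
    (hdir : ∀ ξ, ∀ t ∈ Ico 0 Tstar, w 1 ξ t = 0)
    (hinit : ∀ η ∈ Icc (0 : ℝ) 1, ∀ ξ, 0 ≤ w η ξ 0)
    (hfar : ∀ ε > 0, ∃ R, ∀ η ∈ Icc (0 : ℝ) 1, ∀ ξ, ∀ t ∈ Ico 0 Tstar, R ≤ |ξ| → -ε ≤ w η ξ t) :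
    ∀ η ∈ Icc (0 : ℝ) 1, ∀ ξ, ∀ t ∈ Ico 0 Tstar, 0 ≤ w η ξ t := by
  intro η hη ξ t ht
  -- the barrier is affine in `η`, so its image under `croccoOperator` is `ε` whatever `w` is
  have hbarrier (ε : ℝ) (hε : 0 < ε) : -(ε * (2 + t - η)) < w η ξ t := by
    refine lt_of_strictSubsolution (g := fun η _ t => -(ε * (2 + t - η))) hw (by fun_prop) heq
      hneu (fun _ _ _ _ _ => by simpa [croccoOperator] using hε) (fun _ _ _ => by simpa using hε)
      (fun η hη ξ => by nlinarith [hinit η hη ξ, hη.2])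
      (fun ξ t ht => by nlinarith [hdir ξ t ht, ht.1])
      ?_ η hη ξ t ht
    obtain ⟨R, hR⟩ := hfar (ε / 2) (half_pos hε)
    exact ⟨R, fun η hη ξ t ht hξ => by nlinarith [hR η hη ξ t ht hξ, hη.2, ht.1]⟩
  refine le_of_forall_pos_lt_add fun ε hε => ?_
  have hk : 0 < 2 + t - η := by linarith [ht.1, hη.2]
  have := hbarrier (ε / (2 + t - η)) (div_pos hε hk)
  rw [div_mul_cancel₀ _ hk.ne'] at this
  linarith

theorem crocco_barrier_le (hc : 0 < c)
    (hw : ContDiff ℝ 2 fun p : ℝ × ℝ × ℝ => w p.1 p.2.1 p.2.2)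
    (heq : ∀ η ∈ Ioo (0 : ℝ) 1, ∀ ξ, ∀ t ∈ Ioo 0 Tstar, croccoOperator w (w η ξ t) η ξ t = 0)
    (hneu : ∀ ξ, ∀ t ∈ Ioo 0 Tstar, deriv (fun e => w e ξ t) 0 = 0)
    (hdir : ∀ ξ, ∀ t ∈ Ico 0 Tstar, w 1 ξ t = 0)
    (hinit : ∀ η ∈ Icc (0 : ℝ) 1, ∀ ξ, c * (1 - η) ≤ w η ξ 0)
    (hfar : ∀ ε > 0, ∃ R, ∀ η ∈ Icc (0 : ℝ) 1, ∀ ξ, ∀ t ∈ Ico 0 Tstar, R ≤ |ξ| →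
      c * (1 - η) - ε ≤ w η ξ t)
    (hbounds : ∀ η ∈ Icc (0 : ℝ) 1, ∀ ξ, ∀ t ∈ Ico 0 Tstar, 0 ≤ w η ξ t ∧ w η ξ t ≤ C * (1 - η)) :
    ∀ η ∈ Icc (0 : ℝ) 1, ∀ ξ, ∀ t ∈ Ico 0 Tstar,
      c / 3 * exp (-((4 * C ^ 2 + 1) * t)) * ((1 - η) * (1 + 2 * η)) ≤ w η ξ t := by
  intro η hη ξ t ht
  -- `β` makes `β (1 - η) (1 + 2η) > 4 C² (1 - η)² ≥ 4 w²`, i.e. the barrier a strict subsolution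
  set β := 4 * C ^ 2 + 1
  have hA (t : ℝ) : 0 < c / 3 * exp (-(β * t)) := by positivity
  have hφ {η : ℝ} (hη : η ∈ Icc (0 : ℝ) 1) :
      0 ≤ (1 - η) * (1 + 2 * η) ∧ (1 - η) * (1 + 2 * η) ≤ 3 * (1 - η) :=
    ⟨by nlinarith [hη.1, hη.2], by nlinarith [hη.1, hη.2]⟩
  refine le_of_forall_pos_lt_add fun ε hε => sub_lt_iff_lt_add.1 ?_
  refine lt_of_strictSubsolution
    (g := fun η _ t => c / 3 * exp (-(β * t)) * ((1 - η) * (1 + 2 * η)) - ε) hw (by fun_prop)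
    heq hneu ?_ ?_ ?_ ?_ ?_ η hη ξ t ht
  · intro η hη ξ t ht
    have hweq : croccoOperator (fun η _ t => c / 3 * exp (-(β * t)) * ((1 - η) * (1 + 2 * η)) - ε)
        (w η ξ t) η ξ t =
          c / 3 * exp (-(β * t)) * (β * ((1 - η) * (1 + 2 * η)) - 4 * w η ξ t ^ 2) := by
      simp (disch := fun_prop) only [croccoOperator, deriv_fun_sub, deriv_fun_mul,
        deriv_div_const, deriv_const', zero_div, zero_mul, _root_.deriv_exp, deriv.fun_neg',
        deriv_const_mul_id', mul_neg, zero_add, neg_mul, sub_self, deriv_fun_add, mul_zero,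
        add_zero, sub_zero, neg_neg, deriv_sub_const_fun, deriv_const_mul_field',
        deriv_const_sub_id', one_mul, neg_add_rev]
      ring
    obtain ⟨hw0, hwC⟩ := hbounds η (Ioo_subset_Icc_self hη) ξ t (Ioo_subset_Ico_self ht)
    rw [hweq]
    refine mul_pos (hA t) ?_
    have h1 : w η ξ t ^ 2 ≤ C ^ 2 * (1 - η) ^ 2 := by
      nlinarith [mul_le_mul hwC hwC hw0 (hw0.trans hwC)]
    have h2 : C ^ 2 * (1 - η) ^ 2 ≤ C ^ 2 * (1 - η) :=
      mul_le_mul_of_nonneg_left (by nlinarith [hη.1, hη.2]) (sq_nonneg C)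
    have h3 : β * (1 - η) ≤ β * ((1 - η) * (1 + 2 * η)) :=
      mul_le_mul_of_nonneg_left (by nlinarith [hη.1, hη.2]) (by positivity)
    linarith [hη.2]
  · intro ξ t _
    simp (disch := fun_prop) only [deriv_fun_sub, deriv_fun_mul, deriv_div_const, deriv_const',
      zero_div, zero_mul, _root_.deriv_exp, mul_zero, add_zero, sub_zero, mul_one,
      deriv_const_sub_id', deriv_fun_add, deriv_const_mul_id', zero_add, one_mul]
    linarith [hA t]
  · intro η hη ξ
    simp only [mul_zero, neg_zero, exp_zero, mul_one]
    nlinarith [hinit η hη ξ, (hφ hη).2]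
  · intro ξ t ht
    simp [hdir ξ t ht, hε]
  · obtain ⟨R, hR⟩ := hfar (ε / 2) (half_pos hε)
    refine ⟨R, fun η hη ξ t ht hξ => ?_⟩
    have hexp : exp (-(β * t)) ≤ 1 := exp_le_one_iff.2 (by nlinarith [ht.1, sq_nonneg C])
    have := mul_le_mul_of_nonneg_left hexp (hφ hη).1
    nlinarith [hR η hη ξ t ht hξ, (hφ hη).2]

end Barriers

theorem crocco_lower_bound_general (Tstar c C : ℝ) (hc : 0 < c)
    (w : ℝ → ℝ → ℝ → ℝ)
    (hsmooth : ContDiff ℝ 2 (fun p : ℝ × ℝ × ℝ => w p.1 p.2.1 p.2.2))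
    (heq : ∀ η ∈ Set.Ioo (0:ℝ) 1, ∀ ξ : ℝ, ∀ t ∈ Set.Ioo (0:ℝ) Tstar,
      -(deriv (fun s => w η ξ s) t) - η * deriv (fun x => w η x t) ξ
        + (w η ξ t)^2 * deriv (deriv (fun e => w e ξ t)) η = 0)
    (hneu : ∀ ξ : ℝ, ∀ t ∈ Set.Ico (0:ℝ) Tstar, deriv (fun e => w e ξ t) 0 = 0)
    (hdir : ∀ ξ : ℝ, ∀ t ∈ Set.Ico (0:ℝ) Tstar, w 1 ξ t = 0)
    (hinit : ∀ η ∈ Set.Icc (0:ℝ) 1, ∀ ξ : ℝ,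
      c * (1 - η) ≤ w η ξ 0 ∧ w η ξ 0 ≤ C * (1 - η))
    (hinf : ∀ ε > (0:ℝ), ∃ R : ℝ, ∀ η ∈ Set.Icc (0:ℝ) 1, ∀ ξ : ℝ,
      ∀ t ∈ Set.Ico (0:ℝ) Tstar, R ≤ |ξ| →
        c * (1 - η) - ε ≤ w η ξ t ∧ w η ξ t ≤ C * (1 - η) + ε)
    (hupper : ∀ η ∈ Set.Icc (0:ℝ) 1, ∀ ξ : ℝ, ∀ t ∈ Set.Ico (0:ℝ) Tstar,
      w η ξ t ≤ C * (1 - η)) :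
    ∃ c₁ > (0:ℝ), ∀ η ∈ Set.Icc (0:ℝ) 1, ∀ ξ : ℝ, ∀ t ∈ Set.Ico (0:ℝ) Tstar,
      c₁ * (1 - η) ≤ w η ξ t := by
  have hneu' (ξ t) (ht : t ∈ Ioo 0 Tstar) := hneu ξ t (Ioo_subset_Ico_self ht)
  have hinit' (η) (hη : η ∈ Icc (0 : ℝ) 1) (ξ) := (hinit η hη ξ).1
  have hfar (ε) (hε : 0 < ε) := (hinf ε hε).imp fun _ hR η hη ξ t ht hξ => (hR η hη ξ t ht hξ).1
  have hnonneg := crocco_nonneg hsmooth heq hneu' hdir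
    (fun η hη ξ => (mul_nonneg hc.le (sub_nonneg.2 hη.2)).trans (hinit' η hη ξ))
    (fun ε hε => (hfar ε hε).imp fun _ hR η hη ξ t ht hξ => by
      nlinarith [hR η hη ξ t ht hξ, mul_nonneg hc.le (sub_nonneg.2 hη.2)])
  have hlower := crocco_barrier_le hc hsmooth heq hneu' hdir hinit' hfar
    fun η hη ξ t ht => ⟨hnonneg η hη ξ t ht, hupper η hη ξ t ht⟩
  refine ⟨c / 3 * exp (-((4 * C ^ 2 + 1) * Tstar)), by positivity, fun η hη ξ t ht => ?_⟩
  have hexp : exp (-((4 * C ^ 2 + 1) * Tstar)) ≤ exp (-((4 * C ^ 2 + 1) * t)) :=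
    exp_le_exp.2 (by nlinarith [ht.2, sq_nonneg C])
  have hprofile : 1 - η ≤ (1 - η) * (1 + 2 * η) := by nlinarith [hη.1, hη.2]
  refine le_trans ?_ (hlower η hη ξ t ht)
  gcongr
  exact sub_nonneg.2 hη.2

theorem crocco_lower_bound (Tstar c C : ℝ) (hT : 0 < Tstar) (hc : 0 < c) (hcC : c ≤ C)
    (w : ℝ → ℝ → ℝ → ℝ)
    (hsmooth : ContDiff ℝ 2 (fun p : ℝ × ℝ × ℝ => w p.1 p.2.1 p.2.2))
    (heq : ∀ η ∈ Set.Ioo (0:ℝ) 1, ∀ ξ : ℝ, ∀ t ∈ Set.Ioo (0:ℝ) Tstar,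
      -(deriv (fun s => w η ξ s) t) - η * deriv (fun x => w η x t) ξ
        + (w η ξ t)^2 * deriv (deriv (fun e => w e ξ t)) η = 0)
    (hneu : ∀ ξ : ℝ, ∀ t ∈ Set.Ico (0:ℝ) Tstar, deriv (fun e => w e ξ t) 0 = 0)
    (hdir : ∀ ξ : ℝ, ∀ t ∈ Set.Ico (0:ℝ) Tstar, w 1 ξ t = 0)
    (hinit : ∀ η ∈ Set.Icc (0:ℝ) 1, ∀ ξ : ℝ,
      c * (1 - η) ≤ w η ξ 0 ∧ w η ξ 0 ≤ C * (1 - η))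
    (hinf : ∀ ε > (0:ℝ), ∃ R : ℝ, ∀ η ∈ Set.Icc (0:ℝ) 1, ∀ ξ : ℝ,
      ∀ t ∈ Set.Ico (0:ℝ) Tstar, R ≤ |ξ| →
        c * (1 - η) - ε ≤ w η ξ t ∧ w η ξ t ≤ C * (1 - η) + ε)
    (hupper : ∀ η ∈ Set.Icc (0:ℝ) 1, ∀ ξ : ℝ, ∀ t ∈ Set.Ico (0:ℝ) Tstar,
      w η ξ t ≤ C * (1 - η)) :
    ∃ c₁ > (0:ℝ), ∀ η ∈ Set.Icc (0:ℝ) 1, ∀ ξ : ℝ, ∀ t ∈ Set.Ico (0:ℝ) Tstar,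
      c₁ * (1 - η) ≤ w η ξ t :=
  crocco_lower_bound_general Tstar c C hc w hsmooth heq hneu hdir hinit hinf hupper
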